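/- In the OPT setup, there exists a maximum matching of the sparsity pattern S_{X_{W*}} that touches no vertex of J: that is, there is a matching M' ⊆ S_{X_{W*}} with |M'| = ν(S_{X_{W*}}) such that no pair (i,k) ∈ M' has i ∈ J. -/

import Mathlib

open Matrix MeasureTheory

/-- `A` has sparsity pattern `S`: the nonzero entries of `A` are exactly those indexed by `S`. -/
def HasPattern {m n : ℕ} (S : Finset (Fin m × Fin n)) (A : Matrix (Fin m) (Fin n) ℝ) : Prop :=
  ∀ i j, A i j ≠ 0 ↔ (i, j) ∈ S

/-- Generic rank of the class of matrices with sparsity pattern `S`. -/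
noncomputable def sprank {m n : ℕ} (S : Finset (Fin m × Fin n)) : ℕ :=
  sSup {r : ℕ | ∃ A : Matrix (Fin m) (Fin n) ℝ, HasPattern S A ∧ A.rank = r}

/-- The sparsity pattern restricted to the rows in `T` (rows outside `T` become zero). -/
def patternOn {m n : ℕ} (S : Finset (Fin m × Fin n)) (T : Finset (Fin m)) :
    Finset (Fin m × Fin n) :=
  S.filter (fun p => p.1 ∈ T)

/-- A matching of a sparsity pattern: any two distinct pairs differ in both coordinates. -/
def IsMatching {m n : ℕ} (M : Finset (Fin m × Fin n)) : Prop :=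
  ∀ p ∈ M, ∀ q ∈ M, p ≠ q → p.1 ≠ q.1 ∧ p.2 ≠ q.2

/-- `nu S` : maximum cardinality of a matching contained in `S`. -/
noncomputable def nu {m n : ℕ} (S : Finset (Fin m × Fin n)) : ℕ :=
  sSup {k : ℕ | ∃ M ⊆ S, IsMatching M ∧ M.card = k}

/-- ℓ₀ "norm": number of nonzero entries of a vector. -/
noncomputable def l0 {m : ℕ} (y : Fin m → ℝ) : ℕ :=
  (Finset.univ.filter (fun i => y i ≠ 0)).card

/-- `cospark A` : minimum of `‖A x‖₀` over nonzero `x`. -/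
noncomputable def cospark {m n : ℕ} (A : Matrix (Fin m) (Fin n) ℝ) : ℕ :=
  sInf {k : ℕ | ∃ x : Fin n → ℝ, x ≠ 0 ∧ l0 (A.mulVec x) = k}

/-- Generic cospark of the class of matrices with sparsity pattern `S`. -/
noncomputable def spcospark {m n : ℕ} (S : Finset (Fin m × Fin n)) : ℕ :=
  sSup {k : ℕ | ∃ A : Matrix (Fin m) (Fin n) ℝ, HasPattern S A ∧ cospark A = k}

/-- The row-submatrix `A_T`, realized as `A` with the rows outside `T` zeroed out. -/
noncomputable def rowRestrict {m n : ℕ} (A : Matrix (Fin m) (Fin n) ℝ) (T : Finset (Fin m)) :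
    Matrix (Fin m) (Fin n) ℝ :=
  Matrix.of fun i j => if i ∈ T then A i j else 0

/-- `X_W` : the rows of the pattern `S` all of whose nonzero positions lie in the columns `W`. -/
def rowsIn {m n : ℕ} (S : Finset (Fin m × Fin n)) (W : Finset (Fin n)) : Finset (Fin m) :=
  Finset.univ.filter (fun i => ∀ j, (i, j) ∈ S → j ∈ W)

/-!
Let a maximum matching `N` of `S_{X_{W*}}` cover a row `j ∈ J` by `(j, c)`, and let `(i, c) ∈ M`.
Handing `c` over from `i` to `j` in `M` gives another maximum matching of `S_OPT` with column set
`W*`, now leaving `i` free; so `i ∈ X_{W*}`, since otherwise `i` could be matched to `v`. If `N`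
leaves `i` free, hand `c` over from `j` to `i` in `N`; otherwise recurse on `N` without `(j, c)`
with `i` in the role of `j`, and add `(i, c)` to the result. Such an exchange frees `j` and covers
only rows of `I`, so repeating it removes all rows of `J` from `N`.
-/

variable {m n : ℕ}

section Matching

variable {M N : Finset (Fin m × Fin n)}

theorem IsMatching.subset (hM : IsMatching M) (hNM : N ⊆ M) : IsMatching N :=
  fun p hp q hq hpq => hM p (hNM hp) q (hNM hq) hpq

theorem IsMatching.eq_of_fst_eq (hM : IsMatching M) {p q : Fin m × Fin n} (hp : p ∈ M)
    (hq : q ∈ M) (h : p.1 = q.1) : p = q := by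
  by_contra hpq
  exact (hM p hp q hq hpq).1 h

theorem IsMatching.eq_of_snd_eq (hM : IsMatching M) {p q : Fin m × Fin n} (hp : p ∈ M)
    (hq : q ∈ M) (h : p.2 = q.2) : p = q := by
  by_contra hpq
  exact (hM p hp q hq hpq).2 h

theorem IsMatching.insert (hM : IsMatching M) {p : Fin m × Fin n}
    (h₁ : p.1 ∉ M.image Prod.fst) (h₂ : p.2 ∉ M.image Prod.snd) : IsMatching (insert p M) := by
  have key : ∀ q ∈ M, p.1 ≠ q.1 ∧ p.2 ≠ q.2 := fun q hq =>
    ⟨fun h => h₁ (Finset.mem_image.mpr ⟨q, hq, h.symm⟩),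
      fun h => h₂ (Finset.mem_image.mpr ⟨q, hq, h.symm⟩)⟩
  intro a ha b hb hab
  rcases Finset.mem_insert.mp ha with rfl | haM <;> rcases Finset.mem_insert.mp hb with rfl | hbM
  · exact absurd rfl hab
  · exact key b hbM
  · exact (key a haM).imp Ne.symm Ne.symm
  · exact hM a haM b hbM hab

theorem IsMatching.fst_notMem_image_erase (hM : IsMatching M) {p : Fin m × Fin n} (hp : p ∈ M) :
    p.1 ∉ (M.erase p).image Prod.fst := by
  simp only [Finset.mem_image, Finset.mem_erase, not_exists, not_and]
  exact fun q ⟨hqp, hq⟩ hqp₁ => hqp (hM.eq_of_fst_eq hq hp hqp₁)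

theorem IsMatching.snd_notMem_image_erase (hM : IsMatching M) {p : Fin m × Fin n} (hp : p ∈ M) :
    p.2 ∉ (M.erase p).image Prod.snd := by
  simp only [Finset.mem_image, Finset.mem_erase, not_exists, not_and]
  exact fun q ⟨hqp, hq⟩ hqp₂ => hqp (hM.eq_of_snd_eq hq hp hqp₂)

theorem bddAbove_card_isMatching (S : Finset (Fin m × Fin n)) :
    BddAbove {k | ∃ L ⊆ S, IsMatching L ∧ L.card = k} :=
  ⟨S.card, fun _ ⟨_, hLS, _, hL⟩ => hL ▸ Finset.card_le_card hLS⟩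

theorem card_le_nu {S : Finset (Fin m × Fin n)} (hNS : N ⊆ S) (hN : IsMatching N) :
    N.card ≤ nu S :=
  le_csSup (bddAbove_card_isMatching S) ⟨N, hNS, hN, rfl⟩

theorem exists_isMatching_card_eq_nu (S : Finset (Fin m × Fin n)) :
    ∃ N ⊆ S, IsMatching N ∧ N.card = nu S :=
  Nat.sSup_mem (s := {k | ∃ L ⊆ S, IsMatching L ∧ L.card = k})
    ⟨0, ∅, Finset.empty_subset S, by simp [IsMatching], rfl⟩ (bddAbove_card_isMatching S)

end Matching

def rematch (M : Finset (Fin m × Fin n)) (i j : Fin m) (c : Fin n) : Finset (Fin m × Fin n) :=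
  insert (j, c) (M.erase (i, c))

section Rematch

variable {M : Finset (Fin m × Fin n)} {i j : Fin m} {c : Fin n}

theorem IsMatching.rematch (hM : IsMatching M) (hic : (i, c) ∈ M)
    (hj : j ∉ M.image Prod.fst) : IsMatching (rematch M i j c) :=
  (hM.subset (M.erase_subset _)).insert
    (fun h => hj (Finset.image_subset_image (M.erase_subset _) h)) (hM.snd_notMem_image_erase hic)

theorem card_rematch (hic : (i, c) ∈ M) (hj : j ∉ M.image Prod.fst) :
    (rematch M i j c).card = M.card := by
  have hjc : (j, c) ∉ M.erase (i, c) := fun h =>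
    hj (Finset.mem_image.mpr ⟨(j, c), Finset.mem_of_mem_erase h, rfl⟩)
  rw [rematch, Finset.card_insert_of_notMem hjc, Finset.card_erase_of_mem hic,
    Nat.sub_add_cancel (Finset.card_pos.mpr ⟨_, hic⟩)]

theorem image_snd_rematch (hic : (i, c) ∈ M) :
    (rematch M i j c).image Prod.snd = M.image Prod.snd := by
  ext x
  simp only [rematch, Finset.image_insert, Finset.mem_insert, Finset.mem_image, Finset.mem_erase]
  constructor
  · rintro (rfl | ⟨q, ⟨-, hq⟩, rfl⟩)
    exacts [⟨_, hic, rfl⟩, ⟨q, hq, rfl⟩]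
  · rintro ⟨q, hq, rfl⟩
    by_cases hqic : q = (i, c)
    · exact Or.inl (by rw [hqic])
    · exact Or.inr ⟨q, ⟨hqic, hq⟩, rfl⟩

theorem fst_notMem_image_rematch (hM : IsMatching M) (hic : (i, c) ∈ M) (hij : i ≠ j) :
    i ∉ (rematch M i j c).image Prod.fst := by
  rw [rematch, Finset.image_insert, Finset.mem_insert, not_or]
  exact ⟨hij, hM.fst_notMem_image_erase hic⟩

theorem rematch_subset {P : Finset (Fin m × Fin n)} (hMP : M ⊆ P) (hjc : (j, c) ∈ P) :
    rematch M i j c ⊆ P :=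
  Finset.insert_subset hjc ((M.erase_subset _).trans hMP)

end Rematch

def IsMaxMatching (P M : Finset (Fin m × Fin n)) : Prop :=
  M ⊆ P ∧ IsMatching M ∧ ∀ L ⊆ P, IsMatching L → L.card ≤ M.card

section MaxMatching

variable {S : Finset (Fin m × Fin n)} {T : Finset (Fin m)} {W : Finset (Fin n)}
  {M : Finset (Fin m × Fin n)}

theorem IsMaxMatching.rematch {P : Finset (Fin m × Fin n)} (hM : IsMaxMatching P M) {i j : Fin m}
    {c : Fin n} (hic : (i, c) ∈ M) (hjM : j ∉ M.image Prod.fst) (hjc : (j, c) ∈ P) :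
    IsMaxMatching P (rematch M i j c) :=
  ⟨rematch_subset hM.1 hjc, hM.2.1.rematch hic hjM, card_rematch hic hjM ▸ hM.2.2⟩

/-- Otherwise `i` could be matched to a column outside `W`, which `M` leaves free. -/
theorem IsMaxMatching.mem_rowsIn (hM : IsMaxMatching (patternOn S T) M)
    (hMW : M.image Prod.snd = W) {i : Fin m} (hiT : i ∈ T) (hiM : i ∉ M.image Prod.fst) :
    i ∈ rowsIn S W := by
  by_contra hiX
  obtain ⟨d, hidS, hdW⟩ : ∃ d, (i, d) ∈ S ∧ d ∉ W := by simpa [rowsIn] using hiX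
  have hcard := hM.2.2 (insert (i, d) M)
    (Finset.insert_subset (Finset.mem_filter.mpr ⟨hidS, hiT⟩) hM.1)
    (hM.2.1.insert hiM (hMW ▸ hdW))
  rw [Finset.card_insert_of_notMem fun h => hiM (Finset.mem_image_of_mem _ h)] at hcard
  omega

end MaxMatching

section Exchange

variable {S : Finset (Fin m × Fin n)} {T : Finset (Fin m)} {W : Finset (Fin n)}

theorem snd_mem_of_mem_patternOn_rowsIn {p : Fin m × Fin n}
    (hp : p ∈ patternOn S (rowsIn S W)) : p.2 ∈ W := by
  obtain ⟨hpS, hpW⟩ := Finset.mem_filter.mp hp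
  exact (Finset.mem_filter.mp hpW).2 p.2 hpS

theorem fst_notMem_image_of_subset_union {M N N₁ : Finset (Fin m × Fin n)} (hN : IsMatching N)
    {j : Fin m} {c : Fin n} (hjc : (j, c) ∈ N) (hjM : j ∉ M.image Prod.fst) (hN₁ : N₁ ⊆ N ∪ M)
    (hcN₁ : c ∉ N₁.image Prod.snd) : j ∉ N₁.image Prod.fst := by
  intro h
  obtain ⟨q, hq, hqj⟩ := Finset.mem_image.mp h
  have hqjc : q = (j, c) := by
    rcases Finset.mem_union.mp (hN₁ hq) with hqN | hqM
    · exact hN.eq_of_fst_eq hqN hjc hqj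
    · exact absurd (Finset.mem_image.mpr ⟨q, hqM, hqj⟩) hjM
  exact hcN₁ (Finset.mem_image.mpr ⟨q, hq, by rw [hqjc]⟩)

theorem exists_matching_rowsIn_forall_fst_ne (M N : Finset (Fin m × Fin n))
    (hM : IsMaxMatching (patternOn S T) M) (hMW : M.image Prod.snd = W)
    (hNS : N ⊆ patternOn S (rowsIn S W)) (hN : IsMatching N)
    {j : Fin m} {c : Fin n} (hjc : (j, c) ∈ N) (hjT : j ∈ T) (hjM : j ∉ M.image Prod.fst) :
    ∃ N' ⊆ patternOn S (rowsIn S W), IsMatching N' ∧ N'.card = N.card ∧ N' ⊆ N ∪ M ∧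
      N'.image Prod.snd ⊆ N.image Prod.snd ∧ j ∉ N'.image Prod.fst := by
  induction N using Finset.strongInduction generalizing M j c with
  | H N ih =>
  have hcW : c ∈ W := snd_mem_of_mem_patternOn_rowsIn (hNS hjc)
  obtain ⟨i, hic⟩ : ∃ i, (i, c) ∈ M := by simpa [← hMW] using hcW
  have hij : i ≠ j := fun h => hjM (Finset.mem_image.mpr ⟨_, hic, h⟩)
  obtain ⟨hicS, hiT⟩ := Finset.mem_filter.mp (hM.1 hic)
  have hM₁ : IsMaxMatching (patternOn S T) (rematch M i j c) :=
    hM.rematch hic hjM (Finset.mem_filter.mpr ⟨(Finset.mem_filter.mp (hNS hjc)).1, hjT⟩)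
  have hM₁W : (rematch M i j c).image Prod.snd = W := (image_snd_rematch hic).trans hMW
  have hiM₁ : i ∉ (rematch M i j c).image Prod.fst := fst_notMem_image_rematch hM.2.1 hic hij
  have hicX : (i, c) ∈ patternOn S (rowsIn S W) :=
    Finset.mem_filter.mpr ⟨hicS, hM₁.mem_rowsIn hM₁W hiT hiM₁⟩
  by_cases hiN : i ∈ N.image Prod.fst
  · obtain ⟨c₂, hic₂⟩ : ∃ c₂, (i, c₂) ∈ N := by simpa using hiN
    obtain ⟨N₁, hN₁S, hN₁, hN₁card, hN₁sub, hN₁W, hiN₁⟩ :=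
      ih (N.erase (j, c)) (Finset.erase_ssubset hjc) (rematch M i j c) hM₁ hM₁W
        ((N.erase_subset _).trans hNS) (hN.subset (N.erase_subset _))
        (Finset.mem_erase.mpr ⟨by simp [hij], hic₂⟩) hiT hiM₁
    have hN₁NM : N₁ ⊆ N ∪ M := hN₁sub.trans <| Finset.union_subset
      ((N.erase_subset _).trans Finset.subset_union_left)
      (rematch_subset Finset.subset_union_right (Finset.mem_union_left _ hjc))
    have hcN₁ : c ∉ N₁.image Prod.snd := fun h => hN.snd_notMem_image_erase hjc (hN₁W h)
    have hicN₁ : (i, c) ∉ N₁ := fun h => hiN₁ (Finset.mem_image_of_mem _ h)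
    refine ⟨insert (i, c) N₁, Finset.insert_subset hicX hN₁S, hN₁.insert hiN₁ hcN₁, ?_,
      Finset.insert_subset (Finset.mem_union_right _ hic) hN₁NM, ?_, ?_⟩
    · rw [Finset.card_insert_of_notMem hicN₁, hN₁card, Finset.card_erase_add_one hjc]
    · rw [Finset.image_insert]
      exact Finset.insert_subset (Finset.mem_image.mpr ⟨_, hjc, rfl⟩)
        (hN₁W.trans (Finset.image_subset_image (N.erase_subset _)))
    · rw [Finset.image_insert, Finset.mem_insert, not_or]
      exact ⟨hij.symm, fst_notMem_image_of_subset_union hN hjc hjM hN₁NM hcN₁⟩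
  · refine ⟨rematch N j i c, rematch_subset hNS hicX, hN.rematch hjc hiN, card_rematch hjc hiN,
      rematch_subset Finset.subset_union_left (Finset.mem_union_right _ hic),
      (image_snd_rematch hjc).le, fst_notMem_image_rematch hN hjc hij.symm⟩

theorem exists_matching_rowsIn_forall_fst_notMem {J : Finset (Fin m)} (M : Finset (Fin m × Fin n))
    (hM : IsMaxMatching (patternOn S T) M) (hMW : M.image Prod.snd = W)
    (hJT : J ⊆ T) (hJM : Disjoint J (M.image Prod.fst))
    (N : Finset (Fin m × Fin n)) (hNS : N ⊆ patternOn S (rowsIn S W)) (hN : IsMatching N) :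
    ∃ N' ⊆ patternOn S (rowsIn S W), IsMatching N' ∧ N'.card = N.card ∧ ∀ p ∈ N', p.1 ∉ J := by
  induction hk : (N.filter fun p => p.1 ∈ J).card using Nat.strong_induction_on
    generalizing N with
  | _ k ih =>
  by_cases hJN : ∃ p ∈ N, p.1 ∈ J
  · obtain ⟨⟨j, c⟩, hjc, hjJ⟩ := hJN
    obtain ⟨N', hN'S, hN', hN'card, hN'NM, -, hjN'⟩ :=
      exists_matching_rowsIn_forall_fst_ne M N hM hMW hNS hN hjc (hJT hjJ)
        (Finset.disjoint_left.mp hJM hjJ)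
    have hN'J : N'.filter (fun p => p.1 ∈ J) ⊂ N.filter (fun p => p.1 ∈ J) := by
      refine (Finset.ssubset_iff_of_subset ?_).mpr
        ⟨(j, c), Finset.mem_filter.mpr ⟨hjc, hjJ⟩,
          fun h => hjN' (Finset.mem_image_of_mem _ (Finset.mem_filter.mp h).1)⟩
      intro p hp
      obtain ⟨hpN', hpJ⟩ := Finset.mem_filter.mp hp
      refine Finset.mem_filter.mpr ⟨(Finset.mem_union.mp (hN'NM hpN')).resolve_right ?_, hpJ⟩
      exact fun hpM => Finset.disjoint_left.mp hJM hpJ (Finset.mem_image_of_mem _ hpM)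
    obtain ⟨N'', hN''S, hN'', hN''card, hN''J⟩ :=
      ih _ (hk ▸ Finset.card_lt_card hN'J) N' hN'S hN' rfl
    exact ⟨N'', hN''S, hN'', hN''card.trans hN'card, hN''J⟩
  · push Not at hJN
    exact ⟨N, hNS, hN, rfl, hJN⟩

end Exchange

theorem stmt12_general {m n : ℕ} (S : Finset (Fin m × Fin n))
    (OPT : Finset (Fin m)) (hOPT : nu (patternOn S OPT) = n - 1)
    (M : Finset (Fin m × Fin n)) (hMsub : M ⊆ patternOn S OPT)
    (hM : IsMatching M) (hMcard : M.card = n - 1)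
    (I : Finset (Fin m)) (hI : I = M.image Prod.fst)
    (J : Finset (Fin m)) (hJ : J = OPT \ I)
    (W : Finset (Fin n)) (hW : W = M.image Prod.snd)
    :
    ∃ M' ⊆ patternOn S (rowsIn S W), IsMatching M' ∧
      M'.card = nu (patternOn S (rowsIn S W)) ∧ ∀ p ∈ M', p.1 ∉ J := by
  subst hI hJ
  obtain ⟨N, hNS, hN, hNcard⟩ := exists_isMatching_card_eq_nu (patternOn S (rowsIn S W))
  have hMmax : IsMaxMatching (patternOn S OPT) M :=
    ⟨hMsub, hM, fun L hLS hL => hMcard ▸ hOPT ▸ card_le_nu hLS hL⟩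
  obtain ⟨N', hN'S, hN', hN'card, hN'J⟩ := exists_matching_rowsIn_forall_fst_notMem M hMmax
    hW.symm Finset.sdiff_subset Finset.sdiff_disjoint N hNS hN
  exact ⟨N', hN'S, hN', hN'card.trans hNcard, hN'J⟩

/-- in the OPT setup, there exists a maximum matching of the pattern
`S_{X_{W*}}` touching no row of `J`. -/
theorem stmt12 {m n : ℕ} (hn : 1 ≤ n) (hmn : n < m) (S : Finset (Fin m × Fin n))
    (hspr : sprank S = n)
    (OPT : Finset (Fin m)) (hOPT : nu (patternOn S OPT) = n - 1)
    (hmax : ∀ T : Finset (Fin m), nu (patternOn S T) = n - 1 → T.card ≤ OPT.card)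
    (M : Finset (Fin m × Fin n)) (hMsub : M ⊆ patternOn S OPT)
    (hM : IsMatching M) (hMcard : M.card = n - 1)
    (I : Finset (Fin m)) (hI : I = M.image Prod.fst)
    (J : Finset (Fin m)) (hJ : J = OPT \ I) (hJne : J.Nonempty)
    (W : Finset (Fin n)) (hW : W = M.image Prod.snd)
    (v : Fin n) (hv : v ∉ W)
    :
    ∃ M' ⊆ patternOn S (rowsIn S W), IsMatching M' ∧
      M'.card = nu (patternOn S (rowsIn S W)) ∧ ∀ p ∈ M', p.1 ∉ J :=
  stmt12_general S OPT hOPT M hMsub hM hMcard I hI J hJ W hW
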